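/- arXiv:math/0312470 — 2 statements merged into one kernel-verified Lean document; each statement's English description precedes it below -/
import Mathlib

section
/- Let $n > 3$ and let $\Delta$ be the simplicial complex on $V = \{1,\ldots,n\}$ spanned by the sets $\{a,b,a+b\}$ with $1 \leq a < b$ and $a+b \leq n$, together with the sets $\{a,b,c\}$ with $1 \leq a < b < c \leq n$ and $a+b+c = 2n+1$. Then the number of facets of $\Delta$ equals $\frac{n(n-2)}{3}$ when $3 \nmid n$ (e.g., when $2n+1$ is prime). -/
/-!
A facet `{a, b, c}` with `a < b < c` is determined by `(a, b)`: its largest vertex is `a + b` when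
`a + b ≤ n` and `2n + 1 - a - b` otherwise, and no set is of both kinds because `{a, b, a + b}`
has even sum. The pairs that occur are exactly those with `1 ≤ a < b` and `a + 2b ≤ 2n`. For
fixed `b` there are `min (b - 1) (2n - 2b)` of them; the minimum switches branches near
`b = 2n/3`, so the count is the sum of two arithmetic progressions, which is `n(n - 2)/3` when
`n % 3 ≠ 1`.
-/

open Finset

theorem Finset.exists_eq_insert_insert_singleton_of_card_eq_three {α : Type*} [LinearOrder α]
    {s : Finset α} (hs : #s = 3) : ∃ a b c, a < b ∧ b < c ∧ s = {a, b, c} := by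
  have hf := (s.orderEmbOfFin hs).strictMono
  refine ⟨_, _, _, hf (show (0 : Fin 3) < 1 by decide), hf (show (1 : Fin 3) < 2 by decide), ?_⟩
  ext x
  rw [← mem_coe, ← range_orderEmbOfFin s hs, Set.mem_range, Fin.exists_fin_succ,
    Fin.exists_fin_succ, Fin.exists_fin_one]
  simp [eq_comm]

theorem Finset.insert_insert_singleton_inj {α : Type*} [LinearOrder α] {a b c a' b' c' : α}
    (hab : a < b) (hbc : b < c) (hab' : a' < b') (hbc' : b' < c')
    (h : ({a, b, c} : Finset α) = {a', b', c'}) : a = a' ∧ b = b' ∧ c = c' := by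
  have ha : a ∈ ({a', b', c'} : Finset α) := h ▸ mem_insert_self a _
  have hb : b ∈ ({a', b', c'} : Finset α) := h ▸ mem_insert_of_mem (mem_insert_self b _)
  have hc : c ∈ ({a', b', c'} : Finset α) :=
    h ▸ mem_insert_of_mem (mem_insert_of_mem (mem_singleton_self c))
  have ha' : a' ∈ ({a, b, c} : Finset α) := h ▸ mem_insert_self a' _
  have hc' : c' ∈ ({a, b, c} : Finset α) :=
    h ▸ mem_insert_of_mem (mem_insert_of_mem (mem_singleton_self c'))
  simp only [mem_insert, mem_singleton] at ha hb hc ha' hc'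
  have h₁ : a = a' := by
    rcases ha with h | h | h <;> rcases ha' with h' | h' | h' <;> order
  have h₃ : c = c' := by
    rcases hc with h | h | h <;> rcases hc' with h' | h' | h' <;> order
  exact ⟨h₁, by rcases hb with h | h | h <;> order, h₃⟩

theorem Finset.sum_insert_insert_singleton_of_lt {α β : Type*} [LinearOrder α] [AddCommMonoid β]
    (f : α → β) {a b c : α} (hab : a < b) (hbc : b < c) :
    ∑ x ∈ {a, b, c}, f x = f a + f b + f c := by
  rw [sum_insert (by simp [hab.ne, (hab.trans hbc).ne]), sum_pair hbc.ne, add_assoc]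

theorem two_mul_sum_range_id_add (m : ℕ) : 2 * ∑ i ∈ range m, i + m = m * m := by
  induction m with
  | zero => rfl
  | succ m ih => rw [sum_range_succ]; linarith

/-- The summand is `b` for the first `m` indices and `2(n - 1 - b)` for the last `r`. -/
theorem two_mul_sum_range_min_add {n m r : ℕ} (hn : m + r = n) (hm : 3 * m ≤ 2 * n + 1)
    (hr : 2 * n ≤ 3 * m + 2) :
    2 * ∑ b ∈ range n, min b (2 * (n - 1 - b)) + m + 2 * r = m * m + 2 * (r * r) := by
  subst hn
  have below : ∑ b ∈ range m, min b (2 * (m + r - 1 - b)) = ∑ b ∈ range m, b :=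
    sum_congr rfl fun b hb => by rw [mem_range] at hb; omega
  have above :
      ∑ x ∈ range r, min (m + x) (2 * (m + r - 1 - (m + x))) = 2 * ∑ x ∈ range r, x := by
    rw [mul_sum, ← sum_range_reflect]
    exact sum_congr rfl fun x hx => by rw [mem_range] at hx; omega
  rw [sum_range_add, below, above, ← two_mul_sum_range_id_add m, ← two_mul_sum_range_id_add r]
  ring

-- `⟨b, a⟩` encodes the pair `a < b`, so that the fibre over `b` is an interval.
def facetIndex (n : ℕ) : Finset (Σ _ : ℕ, ℕ) :=
  (Icc 1 n).sigma fun b => Icc 1 (min (b - 1) (2 * n - 2 * b))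

theorem mem_facetIndex {n a b : ℕ} :
    (⟨b, a⟩ : Σ _ : ℕ, ℕ) ∈ facetIndex n ↔ 1 ≤ a ∧ a < b ∧ a + 2 * b ≤ 2 * n := by
  simp only [facetIndex, mem_sigma, mem_Icc]
  omega

theorem card_facetIndex (n : ℕ) :
    #(facetIndex n) = ∑ b ∈ range n, min b (2 * (n - 1 - b)) := by
  rw [facetIndex, card_sigma, ← Ico_add_one_right_eq_Icc, sum_Ico_eq_sum_range,
    Nat.add_sub_cancel]
  exact sum_congr rfl fun b hb => by rw [Nat.card_Icc]; omega

theorem three_mul_card_facetIndex_add (n : ℕ) (h3 : n % 3 ≠ 1) :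
    3 * #(facetIndex n) + 2 * n = n * n := by
  have key := two_mul_sum_range_min_add (n := n) (m := (2 * n + 1) / 3)
    (r := n - (2 * n + 1) / 3) (by omega) (by omega) (by omega)
  rw [card_facetIndex]
  generalize ∑ b ∈ range n, min b (2 * (n - 1 - b)) = s at key ⊢
  obtain ⟨k, rfl | rfl⟩ : ∃ k, n = 3 * k ∨ n = 3 * k + 2 := ⟨n / 3, by omega⟩
  · rw [show (2 * (3 * k) + 1) / 3 = 2 * k by omega, show 3 * k - 2 * k = k by omega] at key
    linarith
  · rw [show (2 * (3 * k + 2) + 1) / 3 = 2 * k + 1 by omega,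
      show 3 * k + 2 - (2 * k + 1) = k + 1 by omega] at key
    linarith

open scoped Classical in
noncomputable def facets (n : ℕ) : Finset (Finset ℕ) :=
  ((Icc 1 n).powersetCard 3).filter fun F =>
    (∃ a b : ℕ, 1 ≤ a ∧ a < b ∧ a + b ≤ n ∧ F = {a, b, a + b}) ∨ (∑ x ∈ F, x) = 2 * n + 1

theorem mem_facets {n : ℕ} {F : Finset ℕ} : F ∈ facets n ↔ F ⊆ Icc 1 n ∧ #F = 3 ∧
    ((∃ a b : ℕ, 1 ≤ a ∧ a < b ∧ a + b ≤ n ∧ F = {a, b, a + b}) ∨ (∑ x ∈ F, x) = 2 * n + 1) := by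
  classical
  rw [facets, mem_filter, mem_powersetCard, and_assoc]

def thirdVertex (n a b : ℕ) : ℕ :=
  if a + b ≤ n then a + b else 2 * n + 1 - a - b

theorem thirdVertex_mem_Ioc {n a b : ℕ} (ha : 1 ≤ a) (h : a + 2 * b ≤ 2 * n) :
    thirdVertex n a b ∈ Set.Ioc b n := by
  rw [Set.mem_Ioc, thirdVertex]
  split_ifs <;> omega

theorem insert_thirdVertex_mem_facets {n a b : ℕ} (ha : 1 ≤ a) (hab : a < b)
    (h : a + 2 * b ≤ 2 * n) : {a, b, thirdVertex n a b} ∈ facets n := by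
  obtain ⟨hbc, hc⟩ := thirdVertex_mem_Ioc ha h
  refine mem_facets.2 ⟨?_, card_eq_three.2 ⟨a, b, _, by omega, by omega, by omega, rfl⟩, ?_⟩
  · simp only [insert_subset_iff, singleton_subset_iff, mem_Icc]
    omega
  · by_cases hn : a + b ≤ n
    · rw [thirdVertex, if_pos hn]
      exact Or.inl ⟨a, b, ha, hab, hn, rfl⟩
    · rw [sum_insert_insert_singleton_of_lt (fun x => x) hab hbc, thirdVertex, if_neg hn]
      omega

theorem exists_eq_insert_thirdVertex_of_mem_facets {n : ℕ} {F : Finset ℕ} (hF : F ∈ facets n) :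
    ∃ a b, 1 ≤ a ∧ a < b ∧ a + 2 * b ≤ 2 * n ∧ F = {a, b, thirdVertex n a b} := by
  obtain ⟨hsub, hcard, hkind⟩ := mem_facets.1 hF
  obtain ⟨a, b, c, hab, hbc, rfl⟩ := exists_eq_insert_insert_singleton_of_card_eq_three hcard
  simp only [insert_subset_iff, singleton_subset_iff, mem_Icc] at hsub
  refine ⟨a, b, by omega, hab, ?_⟩
  rcases hkind with ⟨a', b', ha', hab', hn, heq⟩ | hsum
  · obtain ⟨rfl, rfl, rfl⟩ := insert_insert_singleton_inj hab hbc hab' (by omega) heq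
    rw [thirdVertex, if_pos hn]
    exact ⟨by omega, rfl⟩
  · rw [sum_insert_insert_singleton_of_lt (fun x => x) hab hbc] at hsum
    rw [thirdVertex, if_neg (by omega)]
    refine ⟨by omega, ?_⟩
    congr
    omega

theorem card_facets (n : ℕ) : #(facets n) = #(facetIndex n) := by
  refine (card_bij (fun p _ => {p.2, p.1, thirdVertex n p.2 p.1}) ?_ ?_ ?_).symm
  · rintro ⟨b, a⟩ hp
    obtain ⟨ha, hab, h⟩ := mem_facetIndex.1 hp
    exact insert_thirdVertex_mem_facets ha hab h
  · rintro ⟨b, a⟩ hp ⟨b', a'⟩ hp' heq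
    obtain ⟨ha, hab, h⟩ := mem_facetIndex.1 hp
    obtain ⟨ha', hab', h'⟩ := mem_facetIndex.1 hp'
    obtain ⟨rfl, rfl, -⟩ := insert_insert_singleton_inj hab (thirdVertex_mem_Ioc ha h).1 hab'
      (thirdVertex_mem_Ioc ha' h').1 heq
    rfl
  · intro F hF
    obtain ⟨a, b, ha, hab, h, rfl⟩ := exists_eq_insert_thirdVertex_of_mem_facets hF
    exact ⟨⟨b, a⟩, mem_facetIndex.2 ⟨ha, hab, h⟩, rfl⟩

open scoped Classical in
theorem stmt_13_general (n : ℕ) (h3 : n % 3 ≠ 1) :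
    ((((Finset.Icc 1 n).powersetCard 3).filter (fun F =>
        (∃ a b : ℕ, 1 ≤ a ∧ a < b ∧ a + b ≤ n ∧ F = {a, b, a + b}) ∨
        (∑ x ∈ F, x) = 2 * n + 1)).card) = n * (n - 2) / 3 := by
  change #(facets n) = _
  have h := three_mul_card_facetIndex_add n h3
  rw [card_facets, Nat.mul_sub_left_distrib]
  omega

open scoped Classical in
/-- for `n > 3` with `n ≡ 0` or `2 (mod 3)`, the number of facets of
the complex spanned by the triples `{a,b,a+b}` (`1 ≤ a < b`, `a+b ≤ n`) together with
the triples `{a,b,c} ⊆ [n]` with `a+b+c = 2n+1` equals `n(n-2)/3`. -/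
theorem stmt_13 (n : ℕ) (hn : 3 < n) (h3 : n % 3 ≠ 1) :
    ((((Finset.Icc 1 n).powersetCard 3).filter (fun F =>
        (∃ a b : ℕ, 1 ≤ a ∧ a < b ∧ a + b ≤ n ∧ F = {a, b, a + b}) ∨
        (∑ x ∈ F, x) = 2 * n + 1)).card) = n * (n - 2) / 3 :=
  stmt_13_general n h3
end

section
/- Let $n \geq 5$ with $n = 3k$, and let $\Delta$ be the simplicial complex on $V = \{0,1,\ldots,n-1\}$ spanned by the triples $\{\overline{i}, \overline{i+k}, \overline{i+2k}\}$ for $0 \leq i \leq k-1$ together with $\{\overline{i}, \overline{i+k}, \overline{i+j}\}$ for $0 \leq i \leq 3k-1$ and $k+1 \leq j \leq 2k-1$ (indices mod $n$). Then the number of facets of $\Delta$ equals $\frac{n(n-2)}{3} = k(3k-2)$. -/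
/-!
Put `c = k` in `ZMod (3k)`, an element of order `3`. The triples of the first kind are the `k`
cosets `x + ⟨c⟩`, `0 ≤ x < k`, which are distinct because their representatives differ modulo
`k`. A triple `{x, x + c, x + d}` with `d ∉ ⟨c⟩` is never a coset, and it determines `x` (its
only point whose translate by `c` stays in the triple) and then `d`. For `k < j < 2k` the residue
of `j` is not a multiple of `k`, so the second kind contributes `3k(k - 1)` distinct triples, and
`k + 3k(k - 1) = k(3k - 2)`.
-/

section Triple

variable {G : Type*} [AddCommGroup G] [DecidableEq G]

def triple (x c d : G) : Finset G := {x, x + c, x + d}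

variable {c : G}

theorem sub_mem_zmultiples_of_mem_triple {x z : G} (hz : z ∈ triple x c (2 • c)) :
    z - x ∈ AddSubgroup.zmultiples c := by
  simp only [triple, Finset.mem_insert, Finset.mem_singleton] at hz
  rcases hz with rfl | rfl | rfl <;> simp [nsmul_mem, AddSubgroup.mem_zmultiples]

theorem triple_ne_triple_two_nsmul {x y d : G} (hd : d ∉ AddSubgroup.zmultiples c) :
    triple y c d ≠ triple x c (2 • c) := by
  intro h
  have hy := sub_mem_zmultiples_of_mem_triple (h ▸ by simp [triple] : y ∈ triple x c (2 • c))
  have hyd := sub_mem_zmultiples_of_mem_triple (h ▸ by simp [triple] : y + d ∈ triple x c (2 • c))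
  exact hd (by simpa using sub_mem hyd hy)

theorem triple_inj (h3 : 3 • c = 0) (hc : c ≠ 0) {x y d e : G}
    (hd : d ∉ AddSubgroup.zmultiples c) (he : e ∉ AddSubgroup.zmultiples c)
    (h : triple x c d = triple y c e) : x = y ∧ d = e := by
  have mem : ∀ z ∈ triple y c e, z = x ∨ z = x + c ∨ z = x + d := by
    intro z hz
    rw [← h] at hz
    simpa [triple] using hz
  have hd0 : d ≠ 0 := fun h0 => hd (h0 ▸ zero_mem _)
  have hd2 : d ≠ 2 • c := fun h2 => hd (h2 ▸ nsmul_mem (AddSubgroup.mem_zmultiples c) 2)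
  have he0 : e ≠ 0 := fun h0 => he (h0 ▸ zero_mem _)
  have hec : e ≠ c := fun h1 => he (h1 ▸ AddSubgroup.mem_zmultiples c)
  have hyx : y = x := by
    rcases mem y (by simp [triple]) with hy | hy | hy
    · exact hy
    · rcases mem (y + c) (by simp [triple]) with h' | h' | h'
      · exact absurd (by linear_combination (norm := module) h3 - h' + hy) hc
      · exact absurd (by linear_combination (norm := module) h' - hy) hc
      · exact absurd (by linear_combination (norm := module) hy - h') hd2
    · rcases mem (y + c) (by simp [triple]) with h' | h' | h'
      · exact absurd (by linear_combination (norm := module) h' - hy - h3) hd2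
      · exact absurd (by linear_combination (norm := module) h' - hy) hd0
      · exact absurd (by linear_combination (norm := module) h' - hy) hc
  refine ⟨hyx.symm, ?_⟩
  rcases mem (y + e) (by simp [triple]) with h' | h' | h'
  · exact absurd (by linear_combination (norm := module) h' - hyx) he0
  · exact absurd (by linear_combination (norm := module) h' - hyx) hec
  · linear_combination (norm := module) hyx - h'

end Triple

namespace ZMod

theorem natCast_inj_of_lt {n a b : ℕ} (ha : a < n) (hb : b < n) :
    (a : ZMod n) = b ↔ a = b := by
  rw [natCast_eq_natCast_iff', Nat.mod_eq_of_lt ha, Nat.mod_eq_of_lt hb]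

theorem castHom_eq_of_sub_mem_zmultiples {n k : ℕ} (hkn : k ∣ n) {a b : ZMod n}
    (h : a - b ∈ AddSubgroup.zmultiples (k : ZMod n)) :
    castHom hkn (ZMod k) a = castHom hkn (ZMod k) b := by
  obtain ⟨m, hm⟩ := h
  rw [← sub_eq_zero, ← map_sub, ← hm, map_zsmul, map_natCast, natCast_self, smul_zero]

end ZMod

open Finset

theorem natCast_triple {n a b d : ℕ} :
    ({(a : ZMod n), ((a + b : ℕ) : ZMod n), ((a + d : ℕ) : ZMod n)} : Finset (ZMod n)) =
      triple (a : ZMod n) b d := by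
  simp [triple]

section ThreeK

variable {k : ℕ}

theorem three_nsmul_natCast_eq_zero : 3 • (k : ZMod (3 * k)) = 0 := by
  rw [nsmul_eq_mul, ← Nat.cast_mul, ZMod.natCast_self]

theorem natCast_ne_zero_of_pos (hk : 0 < k) : (k : ZMod (3 * k)) ≠ 0 := by
  rw [← Nat.cast_zero, Ne, ZMod.natCast_inj_of_lt (by omega) (by omega)]
  exact hk.ne'

theorem natCast_notMem_zmultiples {j : ℕ} (hj : j ∈ Icc (k + 1) (2 * k - 1)) :
    (j : ZMod (3 * k)) ∉ AddSubgroup.zmultiples (k : ZMod (3 * k)) := by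
  intro h
  have hjk := ZMod.castHom_eq_of_sub_mem_zmultiples (dvd_mul_left k 3) (b := 0) (by simpa using h)
  rw [map_natCast, map_zero, ZMod.natCast_eq_zero_iff] at hjk
  obtain ⟨m, rfl⟩ := hjk
  rw [mem_Icc] at hj
  have h1 : 1 < m := Nat.lt_of_mul_lt_mul_left (a := k) (by omega)
  have h2 : m < 2 := Nat.lt_of_mul_lt_mul_left (a := k) (by omega)
  omega

theorem card_image_triple_two_nsmul :
    ((range k).image fun i : ℕ => triple (i : ZMod (3 * k)) k (2 • (k : ZMod (3 * k)))).card
      = k := by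
  rw [card_image_of_injOn, card_range]
  intro i hi i' hi' h
  simp only [coe_range, Set.mem_Iio] at hi hi' h
  have hmem : (i' : ZMod (3 * k)) ∈ triple (i : ZMod (3 * k)) k (2 • (k : ZMod (3 * k))) := by
    rw [h]
    simp [triple]
  have hii' := ZMod.castHom_eq_of_sub_mem_zmultiples (dvd_mul_left k 3)
    (sub_mem_zmultiples_of_mem_triple hmem)
  rw [map_natCast, map_natCast, ZMod.natCast_inj_of_lt hi' hi] at hii'
  exact hii'.symm

theorem card_image_triple (hk : 0 < k) :
    (((range (3 * k)) ×ˢ (Icc (k + 1) (2 * k - 1))).image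
      fun p : ℕ × ℕ => triple (p.1 : ZMod (3 * k)) k p.2).card = 3 * k * (k - 1) := by
  rw [card_image_of_injOn, card_product, card_range, Nat.card_Icc,
    show 2 * k - 1 + 1 - (k + 1) = k - 1 by omega]
  rintro ⟨i, j⟩ hij ⟨i', j'⟩ hij' h
  simp only [coe_product, Set.mem_prod, mem_coe, mem_range] at hij hij' h
  obtain ⟨hii', hjj'⟩ := triple_inj three_nsmul_natCast_eq_zero (natCast_ne_zero_of_pos hk)
    (natCast_notMem_zmultiples hij.2) (natCast_notMem_zmultiples hij'.2) h
  rw [mem_Icc] at hij hij'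
  rw [ZMod.natCast_inj_of_lt hij.1 hij'.1] at hii'
  rw [ZMod.natCast_inj_of_lt (by omega) (by omega)] at hjj'
  rw [hii', hjj']

theorem disjoint_image_triple_two_nsmul_image_triple :
    Disjoint ((range k).image fun i : ℕ => triple (i : ZMod (3 * k)) k (2 • (k : ZMod (3 * k))))
      (((range (3 * k)) ×ˢ (Icc (k + 1) (2 * k - 1))).image
        fun p : ℕ × ℕ => triple (p.1 : ZMod (3 * k)) k p.2) := by
  simp only [disjoint_left, mem_image, mem_product, Prod.exists, not_exists, not_and]
  rintro _ ⟨i, -, rfl⟩ i' j ⟨-, hj⟩ h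
  exact triple_ne_triple_two_nsmul (natCast_notMem_zmultiples hj) h

end ThreeK

/-- for `n = 3k ≥ 5`, the complex on `ZMod (3k)` spanned by the
triples `{i, i+k, i+2k}` (`0 ≤ i ≤ k-1`) and `{i, i+k, i+j}`
(`0 ≤ i ≤ 3k-1`, `k+1 ≤ j ≤ 2k-1`) has exactly `n(n-2)/3 = k(3k-2)` facets. -/
theorem stmt_17 (k : ℕ) (hk : 5 ≤ 3 * k) :
    (((Finset.range k).image (fun i =>
        ({((i : ℕ) : ZMod (3 * k)), ((i + k : ℕ) : ZMod (3 * k)),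
          ((i + 2 * k : ℕ) : ZMod (3 * k))} : Finset (ZMod (3 * k)))))
      ∪ (((Finset.range (3 * k)) ×ˢ (Finset.Icc (k + 1) (2 * k - 1))).image
          (fun p =>
            ({((p.1 : ℕ) : ZMod (3 * k)), ((p.1 + k : ℕ) : ZMod (3 * k)),
              ((p.1 + p.2 : ℕ) : ZMod (3 * k))} : Finset (ZMod (3 * k)))))).card
      = k * (3 * k - 2) := by
  have hk0 : 0 < k := by omega
  have h2k : ((2 * k : ℕ) : ZMod (3 * k)) = 2 • (k : ZMod (3 * k)) := by
    rw [nsmul_eq_mul, Nat.cast_mul, Nat.cast_ofNat]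
  simp only [natCast_triple, h2k]
  rw [card_union_of_disjoint disjoint_image_triple_two_nsmul_image_triple,
    card_image_triple_two_nsmul, card_image_triple hk0]
  obtain ⟨m, rfl⟩ : ∃ m, k = m + 1 := ⟨k - 1, by omega⟩
  rw [Nat.add_sub_cancel, show 3 * (m + 1) - 2 = 3 * m + 1 by omega]
  ring
end
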